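/- arXiv:2604.10482 — 5 statements merged into one kernel-verified Lean document; each statement's English description precedes it below -/
import Mathlib

section
/- Under the stated assumptions, the Fréchet correlation coefficient satisfies 0 ≤ ρ ≤ 1. -/
/-! Disintegrating the joint law of `(X, Y)` along `κ` writes the Fréchet variance as
`E[∫ d²(y, μ_F) κ(X)(dy)]`. Since `μ_{F,x}` minimises `z ↦ ∫ d²(y, z) κ(x)(dy)`, the integrand
dominates `V(x) ≥ 0` for `P_X`-a.e. `x`, so `0 ≤ E[V(X)] ≤ V_F`, i.e. `0 ≤ ρ ≤ 1`. -/

open MeasureTheory ProbabilityTheory Bornology Filter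

section Disintegration

variable {Ω α β : Type*} [MeasurableSpace Ω] [MeasurableSpace α] [MeasurableSpace β]
  {μ : Measure Ω} {X : Ω → α} {Y : Ω → β} {κ : Kernel α β}

lemma integrable_snd_compProd_of_map_eq_compProd {E : Type*} [NormedAddCommGroup E]
    {f : β → E} (hX : Measurable X) (hY : Measurable Y)
    (hκ : μ.map (fun ω ↦ (X ω, Y ω)) = μ.map X ⊗ₘ κ) (hf : StronglyMeasurable f)
    (hfY : Integrable (fun ω ↦ f (Y ω)) μ) :
    Integrable (fun p : α × β ↦ f p.2) (μ.map X ⊗ₘ κ) := by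
  rw [← hκ]
  exact (integrable_map_measure (hf.comp_measurable measurable_snd).aestronglyMeasurable
    (hX.prodMk hY).aemeasurable).mpr hfY

variable [IsSFiniteKernel κ] [SFinite (μ.map X)] {E : Type*} [NormedAddCommGroup E]
  [NormedSpace ℝ E] {f : β → E}

lemma integrable_integral_kernel_of_map_eq_compProd (hX : Measurable X) (hY : Measurable Y)
    (hκ : μ.map (fun ω ↦ (X ω, Y ω)) = μ.map X ⊗ₘ κ) (hf : StronglyMeasurable f)
    (hfY : Integrable (fun ω ↦ f (Y ω)) μ) :
    Integrable (fun x ↦ ∫ y, f y ∂κ x) (μ.map X) := by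
  simpa [Measure.compProd] using
    (integrable_snd_compProd_of_map_eq_compProd hX hY hκ hf hfY).integral_compProd

lemma integral_comp_eq_integral_integral_kernel_of_map_eq_compProd (hX : Measurable X)
    (hY : Measurable Y) (hκ : μ.map (fun ω ↦ (X ω, Y ω)) = μ.map X ⊗ₘ κ)
    (hf : StronglyMeasurable f) (hfY : Integrable (fun ω ↦ f (Y ω)) μ) :
    ∫ ω, f (Y ω) ∂μ = ∫ x, ∫ y, f y ∂κ x ∂μ.map X := by
  rw [← Measure.integral_compProd (integrable_snd_compProd_of_map_eq_compProd hX hY hκ hf hfY),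
    ← hκ]
  exact (integral_map (hX.prodMk hY).aemeasurable
    (hf.comp_measurable measurable_snd).aestronglyMeasurable).symm

lemma integral_le_integral_comp_of_ae_le_integral_kernel {V : α → ℝ} {g : β → ℝ}
    (hX : Measurable X) (hY : Measurable Y) (hκ : μ.map (fun ω ↦ (X ω, Y ω)) = μ.map X ⊗ₘ κ)
    (hg : StronglyMeasurable g) (hgY : Integrable (fun ω ↦ g (Y ω)) μ)
    (hV_nonneg : ∀ᵐ x ∂μ.map X, 0 ≤ V x) (hV_le : ∀ᵐ x ∂μ.map X, V x ≤ ∫ y, g y ∂κ x) :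
    ∫ x, V x ∂μ.map X ≤ ∫ ω, g (Y ω) ∂μ := by
  rw [integral_comp_eq_integral_integral_kernel_of_map_eq_compProd hX hY hκ hg hgY]
  exact integral_mono_of_nonneg hV_nonneg
    (integrable_integral_kernel_of_map_eq_compProd hX hY hκ hg hgY) hV_le

end Disintegration

lemma integrable_dist_sq_of_isBounded_univ {Ω β : Type*} [MeasurableSpace Ω] [MetricSpace β]
    [MeasurableSpace β] [OpensMeasurableSpace β] {μ : Measure Ω} [IsFiniteMeasure μ]
    {Y : Ω → β} (hb : IsBounded (Set.univ : Set β)) (hY : Measurable Y) (c : β) :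
    Integrable (fun ω ↦ dist (Y ω) c ^ 2) μ := by
  refine .of_bound
    (((continuous_id.dist continuous_const).pow 2).measurable.comp hY).aestronglyMeasurable
    (Metric.diam (Set.univ : Set β) ^ 2) (ae_of_all _ fun ω ↦ ?_)
  rw [Real.norm_of_nonneg (sq_nonneg _)]
  exact pow_le_pow_left₀ dist_nonneg
    (Metric.dist_le_diam_of_mem hb (Set.mem_univ _) (Set.mem_univ _)) 2

theorem frechet_correlation_coefficient_mem_unit_interval_general
    {Ω 𝓧 𝓨 : Type*} [MeasurableSpace Ω]
    [MeasurableSpace 𝓧]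
    [MetricSpace 𝓨]
    [MeasurableSpace 𝓨] [BorelSpace 𝓨]
    (hbY : IsBounded (Set.univ : Set 𝓨))
    (μ : Measure Ω) [IsProbabilityMeasure μ]
    (X : Ω → 𝓧) (Y : Ω → 𝓨) (hX : Measurable X) (hY : Measurable Y)
    -- `κ` is a regular conditional distribution of `Y` given `X`:
    (κ : Kernel 𝓧 𝓨) [IsMarkovKernel κ]
    (hκ : Measure.map (fun ω => (X ω, Y ω)) μ = (Measure.map X μ).compProd κ)
    -- the global Fréchet mean exists and is unique:
    (μF : 𝓨)
    -- the conditional Fréchet mean exists, is unique `P_X`-a.e., and is measurable in `x`: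
    (μFx : 𝓧 → 𝓨)
    (hμFx_min : ∀ᵐ x ∂(Measure.map X μ), ∀ z : 𝓨,
      (∫ y, dist y (μFx x) ^ 2 ∂(κ x)) ≤ ∫ y, dist y z ^ 2 ∂(κ x))
    -- the Fréchet variance, assumed strictly positive:
    (VF : ℝ) (hVF : VF = ∫ ω, dist (Y ω) μF ^ 2 ∂μ) (hVF_pos : 0 < VF)
    -- the conditional Fréchet variance:
    (V : 𝓧 → ℝ) (hV : ∀ x, V x = ∫ y, dist y (μFx x) ^ 2 ∂(κ x))
    -- the Fréchet correlation coefficient: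
    (ρ : ℝ) (hρ : ρ = 1 - (∫ x, V x ∂(Measure.map X μ)) / VF) :
    0 ≤ ρ ∧ ρ ≤ 1 := by
  have hV_nonneg : ∀ x, 0 ≤ V x := fun x ↦ hV x ▸ integral_nonneg fun _ ↦ sq_nonneg _
  have hV_le_VF : ∫ x, V x ∂(Measure.map X μ) ≤ VF := by
    rw [hVF]
    refine integral_le_integral_comp_of_ae_le_integral_kernel hX hY hκ
      ((continuous_id.dist continuous_const).pow 2).stronglyMeasurable
      (integrable_dist_sq_of_isBounded_univ hbY hY μF) (ae_of_all _ hV_nonneg) ?_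
    filter_upwards [hμFx_min] with x hx
    exact hV x ▸ hx μF
  have hEV_nonneg : 0 ≤ ∫ x, V x ∂(Measure.map X μ) := integral_nonneg hV_nonneg
  rw [hρ]
  exact ⟨sub_nonneg.2 ((div_le_one hVF_pos).2 hV_le_VF),
    sub_le_self _ (div_nonneg hEV_nonneg hVF_pos.le)⟩

/-- Proposition 1 of the paper.
Let `X : Ω → 𝓧` and `Y : Ω → 𝓨` be random elements of bounded, complete, separable metric
spaces, let `κ` be a regular conditional distribution of `Y` given `X`, let `μF` be the
(unique) global Fréchet mean of `Y` with Fréchet variance `VF > 0`, and let `μFx x` be the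
(unique, `P_X`-a.e.) conditional Fréchet mean of `Y` given `X = x` with conditional Fréchet
variance `V x`.  Then the Fréchet correlation coefficient
`ρ = 1 - E[V(X)] / VF` satisfies `0 ≤ ρ ≤ 1`. -/
theorem frechet_correlation_coefficient_mem_unit_interval
    {Ω 𝓧 𝓨 : Type*} [MeasurableSpace Ω]
    [MetricSpace 𝓧] [CompleteSpace 𝓧] [TopologicalSpace.SeparableSpace 𝓧]
    [MeasurableSpace 𝓧] [BorelSpace 𝓧]
    [MetricSpace 𝓨] [CompleteSpace 𝓨] [TopologicalSpace.SeparableSpace 𝓨]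
    [MeasurableSpace 𝓨] [BorelSpace 𝓨]
    (hbX : IsBounded (Set.univ : Set 𝓧)) (hbY : IsBounded (Set.univ : Set 𝓨))
    (μ : Measure Ω) [IsProbabilityMeasure μ]
    (X : Ω → 𝓧) (Y : Ω → 𝓨) (hX : Measurable X) (hY : Measurable Y)
    -- `κ` is a regular conditional distribution of `Y` given `X`:
    (κ : Kernel 𝓧 𝓨) [IsMarkovKernel κ]
    (hκ : Measure.map (fun ω => (X ω, Y ω)) μ = (Measure.map X μ).compProd κ)
    -- the global Fréchet mean exists and is unique:
    (μF : 𝓨)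
    (hμF_min : ∀ z : 𝓨, (∫ ω, dist (Y ω) μF ^ 2 ∂μ) ≤ ∫ ω, dist (Y ω) z ^ 2 ∂μ)
    (hμF_uniq : ∀ z : 𝓨, ((∫ ω, dist (Y ω) z ^ 2 ∂μ) ≤ ∫ ω, dist (Y ω) μF ^ 2 ∂μ) → z = μF)
    -- the conditional Fréchet mean exists, is unique `P_X`-a.e., and is measurable in `x`:
    (μFx : 𝓧 → 𝓨) (hμFx_meas : Measurable μFx)
    (hμFx_min : ∀ᵐ x ∂(Measure.map X μ), ∀ z : 𝓨,
      (∫ y, dist y (μFx x) ^ 2 ∂(κ x)) ≤ ∫ y, dist y z ^ 2 ∂(κ x))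
    (hμFx_uniq : ∀ᵐ x ∂(Measure.map X μ), ∀ z : 𝓨,
      ((∫ y, dist y z ^ 2 ∂(κ x)) ≤ ∫ y, dist y (μFx x) ^ 2 ∂(κ x)) → z = μFx x)
    -- the Fréchet variance, assumed strictly positive:
    (VF : ℝ) (hVF : VF = ∫ ω, dist (Y ω) μF ^ 2 ∂μ) (hVF_pos : 0 < VF)
    -- the conditional Fréchet variance:
    (V : 𝓧 → ℝ) (hV : ∀ x, V x = ∫ y, dist y (μFx x) ^ 2 ∂(κ x))
    -- the Fréchet correlation coefficient:
    (ρ : ℝ) (hρ : ρ = 1 - (∫ x, V x ∂(Measure.map X μ)) / VF) :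
    0 ≤ ρ ∧ ρ ≤ 1 :=
  frechet_correlation_coefficient_mem_unit_interval_general hbY μ X Y hX hY κ hκ μF μFx hμFx_min VF
    hVF hVF_pos V hV ρ hρ
end

section
/- ρ = 1 if and only if there exists a measurable map f : 𝓧 → 𝓨 such that Y = f(X) almost surely; and in that case f(X) = μ_{F,X} almost surely. -/
open MeasureTheory ProbabilityTheory Bornology Filter

/-!
Since `V ≥ 0` and `V_F > 0`, `ρ = 1` means `V = 0` for `P_X`-a.e. `x`, i.e. `κ x` is the Dirac
mass at `μ_{F,x}`; by the disintegration of the law of `(X, Y)` this says `Y = μ_{F,X}` almost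
surely. Conversely, if `Y = f (X)` almost surely then `κ x` is the Dirac mass at `f x` for a.e. `x`,
so `f x` has Fréchet function `0` and hence is the unique conditional Fréchet mean `μ_{F,x}`.
-/

section BoundedMetric

variable {𝓨 : Type*} [MetricSpace 𝓨] [MeasurableSpace 𝓨] [OpensMeasurableSpace 𝓨]

lemma integrable_dist_sq_of_isBounded (hb : IsBounded (Set.univ : Set 𝓨))
    (ν : Measure 𝓨) [IsFiniteMeasure ν] (z : 𝓨) :
    Integrable (fun y => dist y z ^ 2) ν := by
  obtain ⟨C, hC⟩ := Metric.isBounded_iff.mp hb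
  refine .of_bound (by fun_prop) (C ^ 2) (ae_of_all _ fun y => ?_)
  rw [Real.norm_of_nonneg (sq_nonneg _)]
  exact pow_le_pow_left₀ dist_nonneg (hC (Set.mem_univ y) (Set.mem_univ z)) 2

lemma integral_dist_sq_eq_zero_iff (hb : IsBounded (Set.univ : Set 𝓨))
    (ν : Measure 𝓨) [IsFiniteMeasure ν] (z : 𝓨) :
    ∫ y, dist y z ^ 2 ∂ν = 0 ↔ ∀ᵐ y ∂ν, y = z := by
  rw [integral_eq_zero_iff_of_nonneg (fun y => sq_nonneg _)
    (integrable_dist_sq_of_isBounded hb ν z)]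
  simp only [EventuallyEq, Pi.zero_apply, sq_eq_zero_iff, dist_eq_zero]

variable [SecondCountableTopology 𝓨] {𝓧 : Type*} [MeasurableSpace 𝓧]

lemma integrable_integral_dist_sq_kernel (hb : IsBounded (Set.univ : Set 𝓨))
    (P : Measure 𝓧) [IsFiniteMeasure P] (κ : Kernel 𝓧 𝓨) [IsMarkovKernel κ]
    {g : 𝓧 → 𝓨} (hg : Measurable g) :
    Integrable (fun x => ∫ y, dist y (g x) ^ 2 ∂κ x) P := by
  obtain ⟨C, hC⟩ := Metric.isBounded_iff.mp hb
  have hmeas : StronglyMeasurable (fun p : 𝓧 × 𝓨 => dist p.2 (g p.1) ^ 2) :=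
    ((measurable_snd.dist (hg.comp measurable_fst)).pow_const 2).stronglyMeasurable
  refine .of_bound hmeas.integral_kernel_prod_right'.aestronglyMeasurable (C ^ 2)
    (ae_of_all _ fun x => ?_)
  rw [Real.norm_of_nonneg (integral_nonneg fun y => sq_nonneg _)]
  calc ∫ y, dist y (g x) ^ 2 ∂κ x ≤ ∫ _, C ^ 2 ∂κ x :=
        integral_mono (integrable_dist_sq_of_isBounded hb _ _) (integrable_const _) fun y =>
          pow_le_pow_left₀ dist_nonneg (hC (Set.mem_univ y) (Set.mem_univ (g x))) 2
    _ = C ^ 2 := by simp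

lemma integral_integral_dist_sq_eq_zero_iff (hb : IsBounded (Set.univ : Set 𝓨))
    (P : Measure 𝓧) [IsFiniteMeasure P] (κ : Kernel 𝓧 𝓨) [IsMarkovKernel κ]
    {g : 𝓧 → 𝓨} (hg : Measurable g) :
    ∫ x, ∫ y, dist y (g x) ^ 2 ∂κ x ∂P = 0 ↔ ∀ᵐ x ∂P, ∀ᵐ y ∂κ x, y = g x := by
  rw [integral_eq_zero_iff_of_nonneg (fun x => integral_nonneg fun y => sq_nonneg _)
    (integrable_integral_dist_sq_kernel hb P κ hg)]
  exact eventually_congr (ae_of_all _ fun x => integral_dist_sq_eq_zero_iff hb (κ x) (g x))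

end BoundedMetric

lemma ae_eq_comp_iff_ae_ae_of_map_eq_compProd {Ω 𝓧 𝓨 : Type*} [MeasurableSpace Ω]
    [MeasurableSpace 𝓧] [MeasurableSpace 𝓨] [MeasurableEq 𝓨] {μ : Measure Ω} [SFinite μ]
    {X : Ω → 𝓧} {Y : Ω → 𝓨} (hX : Measurable X) (hY : Measurable Y)
    {κ : Kernel 𝓧 𝓨} [IsSFiniteKernel κ]
    (hκ : Measure.map (fun ω => (X ω, Y ω)) μ = (Measure.map X μ).compProd κ)
    {f : 𝓧 → 𝓨} (hf : Measurable f) :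
    (∀ᵐ ω ∂μ, Y ω = f (X ω)) ↔ ∀ᵐ x ∂(Measure.map X μ), ∀ᵐ y ∂κ x, y = f x := by
  have hs : MeasurableSet {p : 𝓧 × 𝓨 | p.2 = f p.1} :=
    measurableSet_eq_fun measurable_snd (hf.comp measurable_fst)
  rw [← Measure.ae_compProd_iff hs, ← hκ, ae_map_iff (hX.prodMk hY).aemeasurable hs]

lemma eq_of_ae_eq_of_unique_minimizer_integral_dist_sq {𝓨 : Type*} [MetricSpace 𝓨]
    [MeasurableSpace 𝓨] {ν : Measure 𝓨} {a m : 𝓨} (ha : ∀ᵐ y ∂ν, y = a)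
    (hm : ∀ z, ∫ y, dist y z ^ 2 ∂ν ≤ ∫ y, dist y m ^ 2 ∂ν → z = m) : a = m := by
  refine hm a ?_
  have hzero : (fun y => dist y a ^ 2) =ᵐ[ν] fun _ => 0 := by
    filter_upwards [ha] with y hy
    simp [hy]
  rw [integral_congr_ae hzero, integral_zero]
  exact integral_nonneg fun y => sq_nonneg _

theorem frechet_correlation_coefficient_eq_one_iff_general
    {Ω 𝓧 𝓨 : Type*} [MeasurableSpace Ω]
    [MeasurableSpace 𝓧]
    [MetricSpace 𝓨] [TopologicalSpace.SeparableSpace 𝓨]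
    [MeasurableSpace 𝓨] [BorelSpace 𝓨]
    (hbY : IsBounded (Set.univ : Set 𝓨))
    (μ : Measure Ω) [IsProbabilityMeasure μ]
    (X : Ω → 𝓧) (Y : Ω → 𝓨) (hX : Measurable X) (hY : Measurable Y)
    -- `κ` is a regular conditional distribution of `Y` given `X`:
    (κ : Kernel 𝓧 𝓨) [IsMarkovKernel κ]
    (hκ : Measure.map (fun ω => (X ω, Y ω)) μ = (Measure.map X μ).compProd κ)
    -- the conditional Fréchet mean exists, is unique `P_X`-a.e., and is measurable in `x`:
    (μFx : 𝓧 → 𝓨) (hμFx_meas : Measurable μFx)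
    (hμFx_uniq : ∀ᵐ x ∂(Measure.map X μ), ∀ z : 𝓨,
      ((∫ y, dist y z ^ 2 ∂(κ x)) ≤ ∫ y, dist y (μFx x) ^ 2 ∂(κ x)) → z = μFx x)
    -- the Fréchet variance, assumed strictly positive:
    (VF : ℝ) (hVF_pos : 0 < VF)
    -- the conditional Fréchet variance:
    (V : 𝓧 → ℝ) (hV : ∀ x, V x = ∫ y, dist y (μFx x) ^ 2 ∂(κ x))
    -- the Fréchet correlation coefficient:
    (ρ : ℝ) (hρ : ρ = 1 - (∫ x, V x ∂(Measure.map X μ)) / VF) :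
    (ρ = 1 ↔ ∃ f : 𝓧 → 𝓨, Measurable f ∧ ∀ᵐ ω ∂μ, Y ω = f (X ω)) ∧
    (∀ f : 𝓧 → 𝓨, Measurable f → (∀ᵐ ω ∂μ, Y ω = f (X ω)) →
      ∀ᵐ ω ∂μ, f (X ω) = μFx (X ω)) := by
  have hdisint {f : 𝓧 → 𝓨} (hf : Measurable f) :=
    ae_eq_comp_iff_ae_ae_of_map_eq_compProd hX hY hκ hf
  have hρ_eq_one : ρ = 1 ↔ ∀ᵐ x ∂(Measure.map X μ), ∀ᵐ y ∂κ x, y = μFx x := by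
    rw [← integral_integral_dist_sq_eq_zero_iff hbY _ κ hμFx_meas, hρ, sub_eq_self,
      div_eq_zero_iff, or_iff_left hVF_pos.ne']
    simp only [hV]
  have hf_eq {f : 𝓧 → 𝓨} (hf : Measurable f) (hYf : ∀ᵐ ω ∂μ, Y ω = f (X ω)) :
      ∀ᵐ x ∂(Measure.map X μ), f x = μFx x := by
    filter_upwards [(hdisint hf).1 hYf, hμFx_uniq] with x hx huniq
    exact eq_of_ae_eq_of_unique_minimizer_integral_dist_sq hx huniq
  refine ⟨⟨fun h => ⟨μFx, hμFx_meas, (hdisint hμFx_meas).2 (hρ_eq_one.1 h)⟩, ?_⟩,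
    fun f hf hYf => ae_of_ae_map hX.aemeasurable (hf_eq hf hYf)⟩
  rintro ⟨f, hf, hYf⟩
  refine hρ_eq_one.2 ?_
  filter_upwards [(hdisint hf).1 hYf, hf_eq hf hYf] with x hx hfx
  exact hfx ▸ hx

/-- Theorem 1 of the paper.
`ρ = 1` if and only if there exists a measurable map `f : 𝓧 → 𝓨` such that `Y = f (X)`
almost surely; and in that case `f (X) = μFx (X)` almost surely. -/
theorem frechet_correlation_coefficient_eq_one_iff
    {Ω 𝓧 𝓨 : Type*} [MeasurableSpace Ω]
    [MetricSpace 𝓧] [CompleteSpace 𝓧] [TopologicalSpace.SeparableSpace 𝓧]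
    [MeasurableSpace 𝓧] [BorelSpace 𝓧]
    [MetricSpace 𝓨] [CompleteSpace 𝓨] [TopologicalSpace.SeparableSpace 𝓨]
    [MeasurableSpace 𝓨] [BorelSpace 𝓨]
    (hbX : IsBounded (Set.univ : Set 𝓧)) (hbY : IsBounded (Set.univ : Set 𝓨))
    (μ : Measure Ω) [IsProbabilityMeasure μ]
    (X : Ω → 𝓧) (Y : Ω → 𝓨) (hX : Measurable X) (hY : Measurable Y)
    -- `κ` is a regular conditional distribution of `Y` given `X`:
    (κ : Kernel 𝓧 𝓨) [IsMarkovKernel κ]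
    (hκ : Measure.map (fun ω => (X ω, Y ω)) μ = (Measure.map X μ).compProd κ)
    -- the global Fréchet mean exists and is unique:
    (μF : 𝓨)
    (hμF_min : ∀ z : 𝓨, (∫ ω, dist (Y ω) μF ^ 2 ∂μ) ≤ ∫ ω, dist (Y ω) z ^ 2 ∂μ)
    (hμF_uniq : ∀ z : 𝓨, ((∫ ω, dist (Y ω) z ^ 2 ∂μ) ≤ ∫ ω, dist (Y ω) μF ^ 2 ∂μ) → z = μF)
    -- the conditional Fréchet mean exists, is unique `P_X`-a.e., and is measurable in `x`:
    (μFx : 𝓧 → 𝓨) (hμFx_meas : Measurable μFx)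
    (hμFx_min : ∀ᵐ x ∂(Measure.map X μ), ∀ z : 𝓨,
      (∫ y, dist y (μFx x) ^ 2 ∂(κ x)) ≤ ∫ y, dist y z ^ 2 ∂(κ x))
    (hμFx_uniq : ∀ᵐ x ∂(Measure.map X μ), ∀ z : 𝓨,
      ((∫ y, dist y z ^ 2 ∂(κ x)) ≤ ∫ y, dist y (μFx x) ^ 2 ∂(κ x)) → z = μFx x)
    -- the Fréchet variance, assumed strictly positive:
    (VF : ℝ) (hVF : VF = ∫ ω, dist (Y ω) μF ^ 2 ∂μ) (hVF_pos : 0 < VF)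
    -- the conditional Fréchet variance:
    (V : 𝓧 → ℝ) (hV : ∀ x, V x = ∫ y, dist y (μFx x) ^ 2 ∂(κ x))
    -- the Fréchet correlation coefficient:
    (ρ : ℝ) (hρ : ρ = 1 - (∫ x, V x ∂(Measure.map X μ)) / VF) :
    (ρ = 1 ↔ ∃ f : 𝓧 → 𝓨, Measurable f ∧ ∀ᵐ ω ∂μ, Y ω = f (X ω)) ∧
    (∀ f : 𝓧 → 𝓨, Measurable f → (∀ᵐ ω ∂μ, Y ω = f (X ω)) →
      ∀ᵐ ω ∂μ, f (X ω) = μFx (X ω)) :=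
  frechet_correlation_coefficient_eq_one_iff_general hbY μ X Y hX hY κ hκ μFx hμFx_meas hμFx_uniq VF
    hVF_pos V hV ρ hρ
end

section
/- For every measurable map g : 𝓧 → 𝓨, E[d_Y²(Y, μ_{F,X})] = E[V(X)] ≤ E[d_Y²(Y, g(X))]. Consequently, 1 − E[d_Y²(Y, g(X))]/V_F ≤ ρ for every measurable g, i.e. the explained-variation coefficient of any regression function g (in particular the Fréchet coefficient of determination R⊕² of a global Fréchet regression model) is at most ρ, with equality when g(X) = μ_{F,X} almost surely. -/
open MeasureTheory ProbabilityTheory Bornology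

/-!
Disintegrating the joint law of `(X, Y)` along `κ` turns the expected squared loss of any
measurable regression map `h` into `∫ F_x (h x) dP_X`, where `F_x z = ∫ d²(y, z) dκ(x)` is the
conditional Fréchet function. Since `μ_{F,x}` minimises `F_x` for `P_X`-a.e. `x`, integrating the
pointwise inequality `F_x (μ_{F,x}) ≤ F_x (h x)` gives the bound on the risk, and dividing by
`V_F > 0` gives the bound on the explained variation. Boundedness of `𝓨` makes every integrand
integrable.
-/

lemma sq_dist_le_sq_diam_univ {𝓨 : Type*} [PseudoMetricSpace 𝓨]
    (hb : IsBounded (Set.univ : Set 𝓨)) (y z : 𝓨) :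
    dist y z ^ 2 ≤ Metric.diam (Set.univ : Set 𝓨) ^ 2 :=
  pow_le_pow_left₀ dist_nonneg (Metric.dist_le_diam_of_mem hb trivial trivial) 2

section SqDist

variable {α 𝓧 𝓨 : Type*} [MeasurableSpace α] [MeasurableSpace 𝓧]
  [PseudoMetricSpace 𝓨] [MeasurableSpace 𝓨] [OpensMeasurableSpace 𝓨]
  [SecondCountableTopology 𝓨]

lemma integrable_sq_dist {ν : Measure α} [IsFiniteMeasure ν]
    (hb : IsBounded (Set.univ : Set 𝓨)) {f g : α → 𝓨} (hf : Measurable f) (hg : Measurable g) :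
    Integrable (fun p => dist (f p) (g p) ^ 2) ν :=
  Integrable.of_bound ((hf.dist hg).pow_const 2).aestronglyMeasurable _
    (ae_of_all _ fun p => by
      rw [Real.norm_of_nonneg (by positivity)]
      exact sq_dist_le_sq_diam_univ hb _ _)

lemma integrable_integral_sq_dist_kernel {P : Measure 𝓧} [IsFiniteMeasure P]
    {κ : Kernel 𝓧 𝓨} [IsFiniteKernel κ] (hb : IsBounded (Set.univ : Set 𝓨))
    {h : 𝓧 → 𝓨} (hh : Measurable h) :
    Integrable (fun x => ∫ y, dist y (h x) ^ 2 ∂(κ x)) P := by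
  have hint : Integrable (fun p : 𝓧 × 𝓨 => dist p.2 (h p.1) ^ 2) (P ⊗ₘ κ) :=
    integrable_sq_dist hb measurable_snd (hh.comp measurable_fst)
  simpa only [norm_pow, Real.norm_eq_abs, abs_dist] using
    ((Measure.integrable_compProd_iff hint.aestronglyMeasurable).1 hint).2

lemma integral_integral_sq_dist_le_of_ae_forall_le {P : Measure 𝓧} [IsFiniteMeasure P]
    {κ : Kernel 𝓧 𝓨} [IsFiniteKernel κ] (hb : IsBounded (Set.univ : Set 𝓨))
    {m h : 𝓧 → 𝓨} (hm : Measurable m) (hh : Measurable h)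
    (hmin : ∀ᵐ x ∂P, ∀ z, ∫ y, dist y (m x) ^ 2 ∂(κ x) ≤ ∫ y, dist y z ^ 2 ∂(κ x)) :
    ∫ x, ∫ y, dist y (m x) ^ 2 ∂(κ x) ∂P ≤ ∫ x, ∫ y, dist y (h x) ^ 2 ∂(κ x) ∂P :=
  integral_mono_ae (integrable_integral_sq_dist_kernel hb hm)
    (integrable_integral_sq_dist_kernel hb hh) (hmin.mono fun x hx => hx (h x))

end SqDist

lemma integral_comp_eq_integral_integral_of_map_eq_compProd
    {Ω 𝓧 𝓨 E : Type*} [MeasurableSpace Ω] [MeasurableSpace 𝓧] [MeasurableSpace 𝓨]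
    [NormedAddCommGroup E] [NormedSpace ℝ E] {μ : Measure Ω} {X : Ω → 𝓧} {Y : Ω → 𝓨}
    {κ : Kernel 𝓧 𝓨} [SFinite (μ.map X)] [IsSFiniteKernel κ]
    (hXY : AEMeasurable (fun ω => (X ω, Y ω)) μ)
    (hκ : μ.map (fun ω => (X ω, Y ω)) = (μ.map X) ⊗ₘ κ)
    {f : 𝓧 × 𝓨 → E} (hf : Integrable f ((μ.map X) ⊗ₘ κ)) :
    ∫ ω, f (X ω, Y ω) ∂μ = ∫ x, ∫ y, f (x, y) ∂(κ x) ∂(μ.map X) := by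
  rw [← Measure.integral_compProd hf, ← hκ, integral_map hXY (hκ ▸ hf).aestronglyMeasurable]

theorem frechet_correlation_coefficient_ge_regression_explained_variation_general
    {Ω 𝓧 𝓨 : Type*} [MeasurableSpace Ω]
    [MeasurableSpace 𝓧]
    [MetricSpace 𝓨] [TopologicalSpace.SeparableSpace 𝓨]
    [MeasurableSpace 𝓨] [BorelSpace 𝓨]
    (hbY : IsBounded (Set.univ : Set 𝓨))
    (μ : Measure Ω) [IsProbabilityMeasure μ]
    (X : Ω → 𝓧) (Y : Ω → 𝓨) (hX : Measurable X) (hY : Measurable Y)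
    -- `κ` is a regular conditional distribution of `Y` given `X`:
    (κ : Kernel 𝓧 𝓨) [IsMarkovKernel κ]
    (hκ : Measure.map (fun ω => (X ω, Y ω)) μ = (Measure.map X μ).compProd κ)
    -- the conditional Fréchet mean exists, is unique `P_X`-a.e., and is measurable in `x`:
    (μFx : 𝓧 → 𝓨) (hμFx_meas : Measurable μFx)
    (hμFx_min : ∀ᵐ x ∂(Measure.map X μ), ∀ z : 𝓨,
      (∫ y, dist y (μFx x) ^ 2 ∂(κ x)) ≤ ∫ y, dist y z ^ 2 ∂(κ x))
    -- the Fréchet variance, assumed strictly positive: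
    (VF : ℝ) (hVF_pos : 0 < VF)
    -- the conditional Fréchet variance:
    (V : 𝓧 → ℝ) (hV : ∀ x, V x = ∫ y, dist y (μFx x) ^ 2 ∂(κ x))
    -- the Fréchet correlation coefficient:
    (ρ : ℝ) (hρ : ρ = 1 - (∫ x, V x ∂(Measure.map X μ)) / VF) :
    ∀ g : 𝓧 → 𝓨, Measurable g →
      ((∫ ω, dist (Y ω) (μFx (X ω)) ^ 2 ∂μ) = ∫ x, V x ∂(Measure.map X μ)) ∧
      ((∫ x, V x ∂(Measure.map X μ)) ≤ ∫ ω, dist (Y ω) (g (X ω)) ^ 2 ∂μ) ∧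
      (1 - (∫ ω, dist (Y ω) (g (X ω)) ^ 2 ∂μ) / VF ≤ ρ) ∧
      ((∀ᵐ ω ∂μ, g (X ω) = μFx (X ω)) →
        1 - (∫ ω, dist (Y ω) (g (X ω)) ^ 2 ∂μ) / VF = ρ) := by
  intro g hg
  have := Measure.isProbabilityMeasure_map (μ := μ) hX.aemeasurable
  have risk (h : 𝓧 → 𝓨) (hh : Measurable h) : ∫ ω, dist (Y ω) (h (X ω)) ^ 2 ∂μ =
      ∫ x, ∫ y, dist y (h x) ^ 2 ∂(κ x) ∂(μ.map X) :=
    integral_comp_eq_integral_integral_of_map_eq_compProd (f := fun p => dist p.2 (h p.1) ^ 2)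
      (hX.prodMk hY).aemeasurable hκ
      (integrable_sq_dist hbY measurable_snd (hh.comp measurable_fst))
  have hV_risk : ∫ ω, dist (Y ω) (μFx (X ω)) ^ 2 ∂μ = ∫ x, V x ∂(μ.map X) := by
    simp only [risk μFx hμFx_meas, hV]
  have hV_le : ∫ x, V x ∂(μ.map X) ≤ ∫ ω, dist (Y ω) (g (X ω)) ^ 2 ∂μ := by
    rw [← hV_risk, risk μFx hμFx_meas, risk g hg]
    exact integral_integral_sq_dist_le_of_ae_forall_le hbY hμFx_meas hg hμFx_min
  refine ⟨hV_risk, hV_le, by rw [hρ]; gcongr, fun hae => ?_⟩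
  have hrisk_eq : ∫ ω, dist (Y ω) (g (X ω)) ^ 2 ∂μ = ∫ ω, dist (Y ω) (μFx (X ω)) ^ 2 ∂μ :=
    integral_congr_ae (hae.mono fun ω hω => by simp only [hω])
  rw [hρ, hrisk_eq, hV_risk]

/-- For every measurable map `g : 𝓧 → 𝓨`,
`E[d_Y²(Y, μ_{F,X})] = E[V(X)] ≤ E[d_Y²(Y, g(X))]`.  Consequently
`1 - E[d_Y²(Y, g(X))]/V_F ≤ ρ` for every measurable `g`, i.e. the explained-variation
coefficient of any regression function `g` is at most `ρ`, with equality when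
`g(X) = μ_{F,X}` almost surely. -/
theorem frechet_correlation_coefficient_ge_regression_explained_variation
    {Ω 𝓧 𝓨 : Type*} [MeasurableSpace Ω]
    [MetricSpace 𝓧] [CompleteSpace 𝓧] [TopologicalSpace.SeparableSpace 𝓧]
    [MeasurableSpace 𝓧] [BorelSpace 𝓧]
    [MetricSpace 𝓨] [CompleteSpace 𝓨] [TopologicalSpace.SeparableSpace 𝓨]
    [MeasurableSpace 𝓨] [BorelSpace 𝓨]
    (hbX : IsBounded (Set.univ : Set 𝓧)) (hbY : IsBounded (Set.univ : Set 𝓨))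
    (μ : Measure Ω) [IsProbabilityMeasure μ]
    (X : Ω → 𝓧) (Y : Ω → 𝓨) (hX : Measurable X) (hY : Measurable Y)
    -- `κ` is a regular conditional distribution of `Y` given `X`:
    (κ : Kernel 𝓧 𝓨) [IsMarkovKernel κ]
    (hκ : Measure.map (fun ω => (X ω, Y ω)) μ = (Measure.map X μ).compProd κ)
    -- the global Fréchet mean exists and is unique:
    (μF : 𝓨)
    (hμF_min : ∀ z : 𝓨, (∫ ω, dist (Y ω) μF ^ 2 ∂μ) ≤ ∫ ω, dist (Y ω) z ^ 2 ∂μ)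
    (hμF_uniq : ∀ z : 𝓨, ((∫ ω, dist (Y ω) z ^ 2 ∂μ) ≤ ∫ ω, dist (Y ω) μF ^ 2 ∂μ) → z = μF)
    -- the conditional Fréchet mean exists, is unique `P_X`-a.e., and is measurable in `x`:
    (μFx : 𝓧 → 𝓨) (hμFx_meas : Measurable μFx)
    (hμFx_min : ∀ᵐ x ∂(Measure.map X μ), ∀ z : 𝓨,
      (∫ y, dist y (μFx x) ^ 2 ∂(κ x)) ≤ ∫ y, dist y z ^ 2 ∂(κ x))
    (hμFx_uniq : ∀ᵐ x ∂(Measure.map X μ), ∀ z : 𝓨,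
      ((∫ y, dist y z ^ 2 ∂(κ x)) ≤ ∫ y, dist y (μFx x) ^ 2 ∂(κ x)) → z = μFx x)
    -- the Fréchet variance, assumed strictly positive:
    (VF : ℝ) (hVF : VF = ∫ ω, dist (Y ω) μF ^ 2 ∂μ) (hVF_pos : 0 < VF)
    -- the conditional Fréchet variance:
    (V : 𝓧 → ℝ) (hV : ∀ x, V x = ∫ y, dist y (μFx x) ^ 2 ∂(κ x))
    -- the Fréchet correlation coefficient:
    (ρ : ℝ) (hρ : ρ = 1 - (∫ x, V x ∂(Measure.map X μ)) / VF) :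
    ∀ g : 𝓧 → 𝓨, Measurable g →
      ((∫ ω, dist (Y ω) (μFx (X ω)) ^ 2 ∂μ) = ∫ x, V x ∂(Measure.map X μ)) ∧
      ((∫ x, V x ∂(Measure.map X μ)) ≤ ∫ ω, dist (Y ω) (g (X ω)) ^ 2 ∂μ) ∧
      (1 - (∫ ω, dist (Y ω) (g (X ω)) ^ 2 ∂μ) / VF ≤ ρ) ∧
      ((∀ᵐ ω ∂μ, g (X ω) = μFx (X ω)) →
        1 - (∫ ω, dist (Y ω) (g (X ω)) ^ 2 ∂μ) / VF = ρ) :=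
  frechet_correlation_coefficient_ge_regression_explained_variation_general hbY μ X Y hX hY κ hκ μFx
    hμFx_meas hμFx_min VF hVF_pos V hV ρ hρ
end

section
/- For every δ ∈ (0, 1), ℙ( max_{1 ≤ m ≤ M_n} | n_m/(n p_{n,m}) − 1 | > δ ) → 0 as n → ∞. In particular, min_{1 ≤ m ≤ M_n} n_m and max_{1 ≤ m ≤ M_n} n_m are both of exact order n/M_n ≍ n^{1−a} in probability. -/
/-!
Each cell count `n_m` is a sum of `n` i.i.d. Bernoulli(`p_{n,m}`) indicators, so Chebyshev gives
`P(|n_m - n p_{n,m}| ≥ δ n p_{n,m}) ≤ 1 / (δ² n p_{n,m}) ≤ M_n / (c₁ δ² n)`. A union bound over the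
`M_n` cells costs another factor `M_n`, and `M_n² / n ≍ n^(2a-1) → 0` since `a < 1/2`. Off the
exceptional event for `δ = 1/2`, every `n_m` lies between `n p_{n,m} / 2` and `3 n p_{n,m} / 2`,
and `n p_{n,m} ≍ n^(1-a)`.
-/

open MeasureTheory ProbabilityTheory Filter
open scoped Classical
open scoped Finset Topology

lemma abs_div_sub_one {x y : ℝ} (hy : 0 < y) : |x / y - 1| = |x - y| / y := by
  rw [div_sub_one hy.ne', abs_div, abs_of_pos hy]

lemma div_mul_rpow_one_sub_le_mul {x M p a c₁ c₄ : ℝ} (hx : 0 < x) (hc₁ : 0 ≤ c₁) (hM₀ : 0 < M)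
    (hM : M ≤ c₄ * x ^ a) (hp : c₁ / M ≤ p) : c₁ / c₄ * x ^ (1 - a) ≤ x * p := by
  have hxa : 0 < x ^ a := Real.rpow_pos_of_pos hx a
  calc c₁ / c₄ * x ^ (1 - a) = x * (c₁ / (c₄ * x ^ a)) := by
        rw [Real.rpow_sub hx, Real.rpow_one]; field_simp
    _ ≤ x * p := by gcongr; exact (div_le_div_of_nonneg_left hc₁ hM₀ hM).trans hp

lemma mul_le_div_mul_rpow_one_sub {x M p a c₂ c₃ : ℝ} (hx : 0 < x) (hc₂ : 0 ≤ c₂) (hc₃ : 0 < c₃)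
    (hM : c₃ * x ^ a ≤ M) (hp : p ≤ c₂ / M) : x * p ≤ c₂ / c₃ * x ^ (1 - a) := by
  have hxa : 0 < x ^ a := Real.rpow_pos_of_pos hx a
  calc x * p ≤ x * (c₂ / (c₃ * x ^ a)) := by
        gcongr; exact hp.trans (div_le_div_of_nonneg_left hc₂ (by positivity) hM)
    _ = c₂ / c₃ * x ^ (1 - a) := by rw [Real.rpow_sub hx, Real.rpow_one]; field_simp

lemma tendsto_sq_div_natCast_of_le_rpow {K : ℕ → ℕ} {C a : ℝ} (ha : a < 1 / 2)
    (hK : ∀ n, 1 ≤ n → (K n : ℝ) ≤ C * (n : ℝ) ^ a) :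
    Tendsto (fun n => (K n : ℝ) ^ 2 / n) atTop (𝓝 0) := by
  have hrate : Tendsto (fun n : ℕ => C ^ 2 * (n : ℝ) ^ (2 * a - 1)) atTop (𝓝 0) := by
    have := ((tendsto_rpow_neg_atTop (by linarith : 0 < 1 - 2 * a)).comp
      tendsto_natCast_atTop_atTop).const_mul (C ^ 2)
    simpa [neg_sub] using this
  refine squeeze_zero' (.of_forall fun n => by positivity) ?_ hrate
  filter_upwards [eventually_ge_atTop 1] with n hn
  have hn₀ : (0 : ℝ) < n := by exact_mod_cast hn
  calc (K n : ℝ) ^ 2 / n ≤ (C * (n : ℝ) ^ a) ^ 2 / n := by gcongr; exact hK n hn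
    _ = C ^ 2 * (n : ℝ) ^ (2 * a - 1) := by
      rw [Real.rpow_sub hn₀, Real.rpow_one, mul_comm 2 a, Real.rpow_mul hn₀.le, Real.rpow_two]
      ring

section

variable {Ω : Type*} [MeasurableSpace Ω] {μ : Measure Ω} [IsProbabilityMeasure μ]

lemma variance_indicator_one {A : Set Ω} (hA : MeasurableSet A) :
    Var[A.indicator 1; μ] = μ.real A * (1 - μ.real A) := by
  have hsq : A.indicator (1 : Ω → ℝ) ^ 2 = A.indicator 1 := by
    ext ω; by_cases h : ω ∈ A <;> simp [h]
  have hmem : MemLp (A.indicator (1 : Ω → ℝ)) 2 μ :=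
    memLp_indicator_const 2 hA 1 (Or.inr (measure_ne_top μ A))
  rw [variance_eq_sub hmem, hsq]
  simp only [integral_indicator_one hA]
  ring

lemma tendsto_measureReal_nhds_one_of_compl_subset {ι : Type*} {l : Filter ι} {A B : ι → Set Ω}
    (hA : Tendsto (fun i => μ.real (A i)) l (𝓝 0)) (hAB : ∀ᶠ i in l, (A i)ᶜ ⊆ B i) :
    Tendsto (fun i => μ.real (B i)) l (𝓝 1) := by
  have hlow : Tendsto (fun i => 1 - μ.real (A i)) l (𝓝 1) := by
    simpa using hA.const_sub 1
  refine tendsto_of_tendsto_of_tendsto_of_le_of_le' hlow tendsto_const_nhds ?_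
    (.of_forall fun _ => measureReal_le_one)
  filter_upwards [hAB] with i hi
  have := measureReal_union_le (μ := μ) (A i) (A i)ᶜ
  rw [Set.union_compl_self, probReal_univ] at this
  linarith [measureReal_mono (μ := μ) hi]

end

section

variable {Ω 𝓧 : Type*} {X : ℕ → Ω → 𝓧} {S : Set 𝓧}

noncomputable def cellCount (X : ℕ → Ω → 𝓧) (S : Set 𝓧) (n : ℕ) (ω : Ω) : ℕ :=
  #{i ∈ Finset.range n | X i ω ∈ S}

lemma cellCount_eq_sum_indicator (n : ℕ) :
    (fun ω => (cellCount X S n ω : ℝ)) = ∑ i ∈ Finset.range n, (X i ⁻¹' S).indicator 1 := by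
  ext ω
  simp [cellCount, Finset.sum_apply, Set.indicator_apply]

variable [MeasurableSpace Ω] [MeasurableSpace 𝓧] {μ : Measure Ω} {PX : Measure 𝓧}

lemma integral_cellCount [IsFiniteMeasure μ] (hX : ∀ i, Measurable (X i))
    (hlaw : ∀ i, μ.map (X i) = PX) (hS : MeasurableSet S) (n : ℕ) :
    μ[fun ω => (cellCount X S n ω : ℝ)] = n * PX.real S := by
  simp only [congrFun (cellCount_eq_sum_indicator n), Finset.sum_apply]
  rw [integral_finsetSum]
  · simp [integral_indicator_one (hS.preimage (hX _)), ← map_measureReal_apply (hX _) hS, hlaw]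
  · exact fun i _ => (integrable_const 1).indicator (hS.preimage (hX i))

lemma variance_cellCount [IsProbabilityMeasure μ]
    (hX : ∀ i, Measurable (X i)) (hindep : Pairwise fun i j => IndepFun (X i) (X j) μ)
    (hlaw : ∀ i, μ.map (X i) = PX)
    (hS : MeasurableSet S) (n : ℕ) :
    Var[fun ω => (cellCount X S n ω : ℝ); μ] = n * (PX.real S * (1 - PX.real S)) := by
  have hind : Measurable (S.indicator (1 : 𝓧 → ℝ)) := measurable_one.indicator hS
  rw [cellCount_eq_sum_indicator, IndepFun.variance_sum]
  · simp [variance_indicator_one (hS.preimage (hX _)), ← map_measureReal_apply (hX _) hS, hlaw]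
  · exact fun i _ => memLp_indicator_const 2 (hS.preimage (hX i)) 1 (Or.inr (measure_ne_top _ _))
  · exact fun i _ j _ hij => (hindep hij).comp hind hind

lemma measureReal_abs_cellCount_sub_ge_le [IsProbabilityMeasure μ]
    (hX : ∀ i, Measurable (X i)) (hindep : Pairwise fun i j => IndepFun (X i) (X j) μ)
    (hlaw : ∀ i, μ.map (X i) = PX)
    (hS : MeasurableSet S) (n : ℕ) {c : ℝ} (hc : 0 < c) :
    μ.real {ω | c ≤ |(cellCount X S n ω : ℝ) - n * PX.real S|}
      ≤ n * (PX.real S * (1 - PX.real S)) / c ^ 2 := by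
  have hmem : MemLp (fun ω => (cellCount X S n ω : ℝ)) 2 μ := by
    rw [cellCount_eq_sum_indicator]
    exact memLp_finsetSum' _ fun i _ =>
      memLp_indicator_const 2 (hS.preimage (hX i)) 1 (Or.inr (measure_ne_top _ _))
  have hcheb := meas_ge_le_variance_div_sq hmem hc
  have hvar_nonneg := variance_nonneg (fun ω => (cellCount X S n ω : ℝ)) μ
  rw [integral_cellCount hX hlaw hS] at hcheb
  rw [variance_cellCount hX hindep hlaw hS] at hcheb hvar_nonneg
  exact ENNReal.toReal_le_of_le_ofReal (by positivity) hcheb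

lemma measureReal_exists_abs_cellCount_div_sub_one_gt_le [IsProbabilityMeasure μ]
    (hX : ∀ i, Measurable (X i)) (hindep : Pairwise fun i j => IndepFun (X i) (X j) μ)
    (hlaw : ∀ i, μ.map (X i) = PX)
    {S : ℕ → Set 𝓧} (hS : ∀ m, MeasurableSet (S m)) {K n : ℕ} (hn : 0 < n) {q δ : ℝ}
    (hq : 0 < q) (hqS : ∀ m < K, q ≤ PX.real (S m)) (hδ : 0 < δ) :
    μ.real {ω | ∃ m < K, δ < |(cellCount X (S m) n ω : ℝ) / (n * PX.real (S m)) - 1|}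
      ≤ K / (δ ^ 2 * n * q) := by
  set E : ℕ → Set Ω := fun m =>
    {ω | δ * (n * PX.real (S m)) ≤ |(cellCount X (S m) n ω : ℝ) - n * PX.real (S m)|}
  have hnp : ∀ m < K, 0 < (n : ℝ) * PX.real (S m) := fun m hm =>
    mul_pos (Nat.cast_pos.2 hn) (hq.trans_le (hqS m hm))
  have hE : ∀ m < K, μ.real (E m) ≤ 1 / (δ ^ 2 * n * q) := fun m hm => by
    have hp := hq.trans_le (hqS m hm)
    calc μ.real (E m)
        ≤ n * (PX.real (S m) * (1 - PX.real (S m))) / (δ * (n * PX.real (S m))) ^ 2 :=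
          measureReal_abs_cellCount_sub_ge_le hX hindep hlaw (hS m) n (by positivity)
      _ = (1 - PX.real (S m)) / (δ ^ 2 * n * PX.real (S m)) := by field_simp
      _ ≤ 1 / (δ ^ 2 * n * q) := by
        gcongr
        · linarith [measureReal_nonneg (μ := PX) (s := S m)]
        · exact hqS m hm
  calc _ ≤ μ.real (⋃ m ∈ Finset.range K, E m) := by
        refine measureReal_mono (fun ω ⟨m, hm, hdev⟩ => ?_) (measure_ne_top _ _)
        refine Set.mem_biUnion (Finset.mem_range.2 hm) ?_
        rw [abs_div_sub_one (hnp m hm), lt_div_iff₀ (hnp m hm)] at hdev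
        exact hdev.le
    _ ≤ ∑ m ∈ Finset.range K, μ.real (E m) := measureReal_biUnion_finset_le _ _
    _ ≤ ∑ _m ∈ Finset.range K, 1 / (δ ^ 2 * n * q) :=
        Finset.sum_le_sum fun m hm => hE m (Finset.mem_range.1 hm)
    _ = K / (δ ^ 2 * n * q) := by simp [div_eq_mul_inv]

lemma tendsto_measureReal_exists_abs_cellCount_div_sub_one_gt [IsProbabilityMeasure μ]
    (hX : ∀ i, Measurable (X i)) (hindep : Pairwise fun i j => IndepFun (X i) (X j) μ)
    (hlaw : ∀ i, μ.map (X i) = PX)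
    {K : ℕ → ℕ} {S : ℕ → ℕ → Set 𝓧} (hS : ∀ n m, MeasurableSet (S n m)) {c C a δ : ℝ}
    (hc : 0 < c) (hcS : ∀ n, ∀ m < K n, c / K n ≤ PX.real (S n m))
    (hK : ∀ n, 1 ≤ n → (K n : ℝ) ≤ C * (n : ℝ) ^ a) (ha : a < 1 / 2) (hδ : 0 < δ) :
    Tendsto (fun n => μ.real {ω | ∃ m < K n,
      δ < |(cellCount X (S n m) n ω : ℝ) / (n * PX.real (S n m)) - 1|}) atTop (𝓝 0) := by
  have hrate := (tendsto_sq_div_natCast_of_le_rpow ha hK).div_const (δ ^ 2 * c)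
  rw [zero_div] at hrate
  refine squeeze_zero' (.of_forall fun _ => measureReal_nonneg) ?_ hrate
  filter_upwards [eventually_ge_atTop 1] with n hn
  obtain hK₀ | hK₀ := (K n).eq_zero_or_pos
  · simp [hK₀]
  have hK₀ : (0 : ℝ) < K n := by exact_mod_cast hK₀
  calc _ ≤ K n / (δ ^ 2 * n * (c / K n)) :=
        measureReal_exists_abs_cellCount_div_sub_one_gt_le hX hindep hlaw (hS n) hn
          (div_pos hc hK₀) (hcS n) hδ
    _ = (K n : ℝ) ^ 2 / n / (δ ^ 2 * c) := by field_simp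

end

theorem cell_counts_uniformly_concentrate_general
    {Ω 𝓧 : Type*} [MeasurableSpace Ω]
    [MeasurableSpace 𝓧]
    (μ : Measure Ω) [IsProbabilityMeasure μ]
    (X : ℕ → Ω → 𝓧) (hXmeas : ∀ i, Measurable (X i))
    (PX : Measure 𝓧)
    (hiid : iIndepFun X μ)
    (hlaw : ∀ i, Measure.map (X i) μ = PX)
    (M : ℕ → ℕ) (Ωp : ℕ → ℕ → Set 𝓧)
    (hmeas : ∀ n m, MeasurableSet (Ωp n m))
    (c₁ c₂ : ℝ) (hc₁ : 0 < c₁) (hc₁₂ : c₁ ≤ c₂)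
    (hbalanced : ∀ n, ∀ m < M n,
      c₁ / (M n : ℝ) ≤ (PX (Ωp n m)).toReal ∧ (PX (Ωp n m)).toReal ≤ c₂ / (M n : ℝ))
    (a : ℝ) (ha : a < 1 / 3)
    (c₃ c₄ : ℝ) (hc₃ : 0 < c₃) (hc₃₄ : c₃ ≤ c₄)
    (hM : ∀ n : ℕ, 1 ≤ n →
      c₃ * (n : ℝ) ^ a ≤ (M n : ℝ) ∧ (M n : ℝ) ≤ c₄ * (n : ℝ) ^ a)
    (count : ℕ → ℕ → Ω → ℕ)
    (hcount : ∀ n m ω,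
      count n m ω = ((Finset.range n).filter fun i => X i ω ∈ Ωp n m).card) :
    (∀ δ : ℝ, 0 < δ → δ < 1 →
      Tendsto (fun n => (μ {ω | ∃ m < M n,
          δ < |(count n m ω : ℝ) / ((n : ℝ) * (PX (Ωp n m)).toReal) - 1|}).toReal)
        atTop (nhds 0)) ∧
    ∃ k₁ k₂ : ℝ, 0 < k₁ ∧ k₁ ≤ k₂ ∧
      Tendsto (fun n => (μ {ω | ∀ m < M n,
          k₁ * (n : ℝ) ^ ((1 : ℝ) - a) ≤ (count n m ω : ℝ) ∧
          (count n m ω : ℝ) ≤ k₂ * (n : ℝ) ^ ((1 : ℝ) - a)}).toReal)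
        atTop (nhds 1) := by
  obtain rfl : count = fun n m => cellCount X (Ωp n m) n := by
    funext n m ω
    exact hcount n m ω
  simp only [← measureReal_def] at hbalanced ⊢
  have hdev δ (hδ : 0 < δ) := tendsto_measureReal_exists_abs_cellCount_div_sub_one_gt hXmeas
    (fun _ _ hij => hiid.indepFun hij) hlaw hmeas hc₁ (fun n m hm => (hbalanced n m hm).1)
    (fun n hn => (hM n hn).2) (by linarith) hδ
  have hc₂ : 0 ≤ c₂ := hc₁.le.trans hc₁₂
  have hc₄ : 0 < c₄ := hc₃.trans_le hc₃₄
  refine ⟨fun δ hδ _ => hdev δ hδ, c₁ / c₄ / 2, 3 / 2 * (c₂ / c₃), by positivity, ?_, ?_⟩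
  · linarith [div_le_div₀ hc₂ hc₁₂ hc₃ hc₃₄, div_pos hc₁ hc₄]
  refine tendsto_measureReal_nhds_one_of_compl_subset (hdev (1 / 2) one_half_pos) ?_
  filter_upwards [eventually_ge_atTop 1] with n hn ω hω m hm
  simp only [Set.mem_compl_iff, Set.mem_ofPred_eq, not_exists, not_and, not_lt] at hω
  have hx : (0 : ℝ) < n := by exact_mod_cast hn
  have hM₀ : (0 : ℝ) < M n := (mul_pos hc₃ (Real.rpow_pos_of_pos hx a)).trans_le (hM n hn).1
  have hp := hbalanced n m hm
  have hnp : 0 < (n : ℝ) * PX.real (Ωp n m) := mul_pos hx ((div_pos hc₁ hM₀).trans_le hp.1)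
  have hclose := hω m hm
  rw [abs_div_sub_one hnp, div_le_iff₀ hnp, abs_le] at hclose
  have hlow := div_mul_rpow_one_sub_le_mul hx hc₁.le hM₀ (hM n hn).2 hp.1
  have hupp := mul_le_div_mul_rpow_one_sub hx hc₂ hc₃ (hM n hn).1 hp.2
  constructor <;> linarith [hclose.1, hclose.2]

/-- Lemma 1 of the paper, first part.
Let `X 0, X 1, …` be i.i.d. random elements of a metric space `𝓧` with common law `PX`.
For each `n`, let `{Ωp n m}_{m < M n}` be a measurable partition of `𝓧` that is balanced
(`c₁/M n ≤ PX (Ωp n m) ≤ c₂/M n`) and whose size satisfies `M n ≍ n^a` with `a ∈ [0, 1/3)`.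
Let `count n m` be the cell counts `n_m = #{i < n : X i ∈ Ωp n m}`.  Then, for every
`δ ∈ (0,1)`, `ℙ(max_{m < M n} |n_m/(n p_{n,m}) - 1| > δ) → 0`; in particular, the minimum
and maximum cell counts are both of exact order `n / M n ≍ n^{1-a}` in probability. -/
theorem cell_counts_uniformly_concentrate
    {Ω 𝓧 : Type*} [MeasurableSpace Ω]
    [MetricSpace 𝓧] [MeasurableSpace 𝓧] [BorelSpace 𝓧]
    (μ : Measure Ω) [IsProbabilityMeasure μ]
    (X : ℕ → Ω → 𝓧) (hXmeas : ∀ i, Measurable (X i))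
    (PX : Measure 𝓧) [IsProbabilityMeasure PX]
    (hiid : iIndepFun X μ)
    (hlaw : ∀ i, Measure.map (X i) μ = PX)
    (M : ℕ → ℕ) (Ωp : ℕ → ℕ → Set 𝓧)
    (hmeas : ∀ n m, MeasurableSet (Ωp n m))
    (hdisj : ∀ n, ∀ m₁ < M n, ∀ m₂ < M n, m₁ ≠ m₂ → Disjoint (Ωp n m₁) (Ωp n m₂))
    (hcover : ∀ n, (⋃ m ∈ Finset.range (M n), Ωp n m) = Set.univ)
    (c₁ c₂ : ℝ) (hc₁ : 0 < c₁) (hc₁₂ : c₁ ≤ c₂)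
    (hbalanced : ∀ n, ∀ m < M n,
      c₁ / (M n : ℝ) ≤ (PX (Ωp n m)).toReal ∧ (PX (Ωp n m)).toReal ≤ c₂ / (M n : ℝ))
    (a : ℝ) (ha₀ : 0 ≤ a) (ha : a < 1 / 3)
    (c₃ c₄ : ℝ) (hc₃ : 0 < c₃) (hc₃₄ : c₃ ≤ c₄)
    (hM : ∀ n : ℕ, 1 ≤ n →
      c₃ * (n : ℝ) ^ a ≤ (M n : ℝ) ∧ (M n : ℝ) ≤ c₄ * (n : ℝ) ^ a)
    (count : ℕ → ℕ → Ω → ℕ)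
    (hcount : ∀ n m ω,
      count n m ω = ((Finset.range n).filter fun i => X i ω ∈ Ωp n m).card) :
    (∀ δ : ℝ, 0 < δ → δ < 1 →
      Tendsto (fun n => (μ {ω | ∃ m < M n,
          δ < |(count n m ω : ℝ) / ((n : ℝ) * (PX (Ωp n m)).toReal) - 1|}).toReal)
        atTop (nhds 0)) ∧
    ∃ k₁ k₂ : ℝ, 0 < k₁ ∧ k₁ ≤ k₂ ∧
      Tendsto (fun n => (μ {ω | ∀ m < M n,
          k₁ * (n : ℝ) ^ ((1 : ℝ) - a) ≤ (count n m ω : ℝ) ∧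
          (count n m ω : ℝ) ≤ k₂ * (n : ℝ) ^ ((1 : ℝ) - a)}).toReal)
        atTop (nhds 1) :=
  cell_counts_uniformly_concentrate_general μ X hXmeas PX hiid hlaw M Ωp hmeas c₁ c₂ hc₁ hc₁₂
    hbalanced a ha c₃ c₄ hc₃ hc₃₄ hM count hcount
end

section
/- The minimum cell count diverges almost surely: min_{1 ≤ m ≤ M_n} n_m → ∞ almost surely as n → ∞. -/
/-!
Fix `K`. A cell of probability `p ≥ c₁ / M_n` receives fewer than `K` of the first `n` points only
if some `n + 1 - K` of them miss it, so a union bound over these index sets and over the `M_n`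
cells bounds the probability that some cell has fewer than `K` points by
`M_n n^K exp (-c₁ (n + 1 - K) / M_n) ≲ n^(a + K) exp (-c n^(1 - a))`.
Since `a < 1` this is summable, and Borel–Cantelli concludes.
-/

open MeasureTheory ProbabilityTheory Filter Finset Real
open scoped Classical Topology Asymptotics

theorem summable_rpow_mul_exp_neg_mul_rpow {b r : ℝ} (hb : 0 < b) (hr : 0 < r) (s : ℝ) :
    Summable fun n : ℕ => (n : ℝ) ^ s * exp (-b * (n : ℝ) ^ r) := by
  have hlim : Tendsto (fun x : ℝ => x ^ (s + 2) * exp (-b * x ^ r)) atTop (𝓝 0) := by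
    refine ((tendsto_rpow_mul_exp_neg_mul_atTop_nhds_zero ((s + 2) / r) b hb).comp
      (tendsto_rpow_atTop hr)).congr' ?_
    filter_upwards [eventually_ge_atTop 0] with x hx
    simp only [Function.comp_apply, ← rpow_mul hx, mul_div_cancel₀ _ hr.ne']
  have hbig : (fun n : ℕ => (n : ℝ) ^ s * exp (-b * (n : ℝ) ^ r)) =O[atTop]
      fun n : ℕ => (n : ℝ) ^ (-2 : ℝ) := by
    refine (((hlim.comp tendsto_natCast_atTop_atTop).isBigO_one ℝ).mul
      (Asymptotics.isBigO_refl (fun n : ℕ => (n : ℝ) ^ (-2 : ℝ)) atTop)).congr' ?_ (by simp)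
    filter_upwards [eventually_gt_atTop 0] with n hn
    rw [Function.comp_apply, mul_right_comm, ← rpow_add (by positivity)]
    ring_nf
  exact summable_of_isBigO_nat (summable_nat_rpow.mpr (by norm_num)) hbig

theorem ae_eventually_notMem_of_measureReal_le {Ω : Type*} [MeasurableSpace Ω] {μ : Measure Ω}
    [IsFiniteMeasure μ] {s : ℕ → Set Ω} {g : ℕ → ℝ} (hg : Summable g)
    (hs : ∀ᶠ n in atTop, μ.real (s n) ≤ g n) : ∀ᵐ ω ∂μ, ∀ᶠ n in atTop, ω ∉ s n := by
  refine ae_eventually_notMem ?_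
  have hsum : Summable fun n => μ.real (s n) := hg.of_norm_bounded_eventually_nat <| by
    filter_upwards [hs] with n hn
    rwa [norm_of_nonneg measureReal_nonneg]
  simpa only [ofReal_measureReal (measure_ne_top μ _)] using hsum.tsum_ofReal_ne_top

theorem Nat.choose_add_one_sub_le_pow {n K : ℕ} (hKn : K ≤ n) : n.choose (n + 1 - K) ≤ n ^ K := by
  rcases K with _ | K
  · simp
  · rw [show n + 1 - (K + 1) = n - K by omega, Nat.choose_symm (by omega)]
    exact (Nat.choose_le_pow n K).trans (Nat.pow_le_pow_right (by omega) K.le_succ)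

theorem setOf_card_filter_lt_subset {Ω 𝓧 : Type*} (X : ℕ → Ω → 𝓧) (A : Set 𝓧) (n K : ℕ) :
    {ω | #{i ∈ range n | X i ω ∈ A} < K} ⊆
      ⋃ S ∈ (range n).powersetCard (n + 1 - K), ⋂ i ∈ S, X i ⁻¹' Aᶜ := by
  intro ω hω
  have hmiss : n + 1 - K ≤ #{i ∈ range n | X i ω ∉ A} := by
    have := card_filter_add_card_filter_not (s := range n) (fun i => X i ω ∈ A)
    rw [Set.mem_ofPred_eq] at hω
    rw [card_range] at this
    omega
  obtain ⟨S, hS, hcard⟩ := exists_subset_card_eq hmiss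
  refine Set.mem_biUnion (mem_powersetCard.mpr ⟨hS.trans (filter_subset _ _), hcard⟩) ?_
  exact Set.mem_iInter₂.mpr fun i hi => (mem_filter.mp (hS hi)).2

section IID

variable {Ω 𝓧 : Type*} [MeasurableSpace Ω] [MeasurableSpace 𝓧] {μ : Measure Ω}
  {X : ℕ → Ω → 𝓧} {PX : Measure 𝓧}

theorem iIndepFun.measure_biInter_preimage (hXmeas : ∀ i, Measurable (X i))
    (hiid : iIndepFun X μ) (hlaw : ∀ i, μ.map (X i) = PX) {B : Set 𝓧} (hB : MeasurableSet B)
    (S : Finset ℕ) : μ (⋂ i ∈ S, X i ⁻¹' B) = PX B ^ #S := by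
  rw [hiid.meas_biInter fun i _ => ⟨B, hB, rfl⟩, ← prod_const]
  refine prod_congr rfl fun i _ => ?_
  rw [← hlaw i, Measure.map_apply (hXmeas i) hB]

theorem measure_card_filter_lt_le (hXmeas : ∀ i, Measurable (X i))
    (hiid : iIndepFun X μ) (hlaw : ∀ i, μ.map (X i) = PX) {A : Set 𝓧} (hA : MeasurableSet A)
    (n K : ℕ) :
    μ {ω | #{i ∈ range n | X i ω ∈ A} < K} ≤ n.choose (n + 1 - K) * PX Aᶜ ^ (n + 1 - K) :=
  calc μ {ω | #{i ∈ range n | X i ω ∈ A} < K}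
      ≤ ∑ S ∈ (range n).powersetCard (n + 1 - K), μ (⋂ i ∈ S, X i ⁻¹' Aᶜ) :=
        (measure_mono (setOf_card_filter_lt_subset X A n K)).trans (measure_biUnion_finset_le _ _)
    _ = n.choose (n + 1 - K) * PX Aᶜ ^ (n + 1 - K) := by
        rw [sum_congr rfl fun S hS => by
            rw [iIndepFun.measure_biInter_preimage hXmeas hiid hlaw hA.compl,
              (mem_powersetCard.mp hS).2],
          sum_const, card_powersetCard, card_range, nsmul_eq_mul]

theorem measureReal_card_filter_lt_le [IsProbabilityMeasure PX] (hXmeas : ∀ i, Measurable (X i))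
    (hiid : iIndepFun X μ) (hlaw : ∀ i, μ.map (X i) = PX) {A : Set 𝓧} (hA : MeasurableSet A)
    {p : ℝ} (hp : p ≤ PX.real A) {n K : ℕ} (hKn : K ≤ n) :
    μ.real {ω | #{i ∈ range n | X i ω ∈ A} < K} ≤ n ^ K * exp (-p * (n + 1 - K)) := by
  have hcompl : PX.real Aᶜ ≤ exp (-p) := by
    rw [probReal_compl_eq_one_sub hA]
    linarith [add_one_le_exp (-p)]
  calc μ.real {ω | #{i ∈ range n | X i ω ∈ A} < K}
      ≤ n.choose (n + 1 - K) * PX.real Aᶜ ^ (n + 1 - K) := by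
        simpa [Measure.real] using ENNReal.toReal_mono (by finiteness)
          (measure_card_filter_lt_le hXmeas hiid hlaw hA n K)
    _ ≤ n ^ K * exp (-p) ^ (n + 1 - K) := by
        gcongr
        exact_mod_cast Nat.choose_add_one_sub_le_pow hKn
    _ = n ^ K * exp (-p * (n + 1 - K)) := by
        rw [← exp_nat_mul, Nat.cast_sub (by omega)]
        push_cast
        ring_nf

end IID

theorem mul_pow_mul_exp_le_of_le_rpow {x M c c₁ a : ℝ} {K : ℕ} (hx : 0 < x) (hK : 2 * K ≤ x)
    (hc₁ : 0 < c₁) (hM : 0 < M) (hMc : M ≤ c * x ^ a) :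
    M * x ^ K * exp (-(c₁ / M) * (x + 1 - K)) ≤
      c * (x ^ (a + K) * exp (-(c₁ / (2 * c)) * x ^ (1 - a))) := by
  have hexponent : c₁ / (2 * c) * x ^ (1 - a) ≤ c₁ / M * (x + 1 - K) :=
    calc c₁ / (2 * c) * x ^ (1 - a) = c₁ / (c * x ^ a) * (x / 2) := by
          rw [rpow_sub hx, rpow_one]
          field_simp
      _ ≤ c₁ / M * (x + 1 - K) := by
          gcongr
          linarith
  calc M * x ^ K * exp (-(c₁ / M) * (x + 1 - K))
      ≤ c * x ^ a * x ^ K * exp (-(c₁ / (2 * c)) * x ^ (1 - a)) := by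
        gcongr ?_ * _ * exp ?_
        · exact mul_nonneg (hM.le.trans hMc) (by positivity)
        · linarith
    _ = c * (x ^ (a + K) * exp (-(c₁ / (2 * c)) * x ^ (1 - a))) := by
        rw [rpow_add hx, rpow_natCast]
        ring

theorem min_cell_count_tendsto_atTop_ae_general
    {Ω 𝓧 : Type*} [MeasurableSpace Ω]
    [MeasurableSpace 𝓧]
    (μ : Measure Ω) [IsProbabilityMeasure μ]
    (X : ℕ → Ω → 𝓧) (hXmeas : ∀ i, Measurable (X i))
    (PX : Measure 𝓧) [IsProbabilityMeasure PX]
    (hiid : iIndepFun X μ)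
    (hlaw : ∀ i, Measure.map (X i) μ = PX)
    (M : ℕ → ℕ) (Ωp : ℕ → ℕ → Set 𝓧)
    (hmeas : ∀ n m, MeasurableSet (Ωp n m))
    (c₁ c₂ : ℝ) (hc₁ : 0 < c₁)
    (hbalanced : ∀ n, ∀ m < M n,
      c₁ / (M n : ℝ) ≤ (PX (Ωp n m)).toReal ∧ (PX (Ωp n m)).toReal ≤ c₂ / (M n : ℝ))
    (a : ℝ) (ha : a < 1 / 3)
    (c₃ c₄ : ℝ) (hc₃ : 0 < c₃) (hc₃₄ : c₃ ≤ c₄)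
    (hM : ∀ n : ℕ, 1 ≤ n →
      c₃ * (n : ℝ) ^ a ≤ (M n : ℝ) ∧ (M n : ℝ) ≤ c₄ * (n : ℝ) ^ a)
    (count : ℕ → ℕ → Ω → ℕ)
    (hcount : ∀ n m ω,
      count n m ω = ((Finset.range n).filter fun i => X i ω ∈ Ωp n m).card) :
    ∀ᵐ ω ∂μ, ∀ K : ℕ, ∀ᶠ n in Filter.atTop, ∀ m < M n, K ≤ count n m ω := by
  rw [ae_all_iff]
  intro K
  have hc₄ : 0 < c₄ := hc₃.trans_le hc₃₄
  have hbad : ∀ᶠ n in atTop, μ.real (⋃ m ∈ range (M n), {ω | count n m ω < K}) ≤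
      c₄ * ((n : ℝ) ^ (a + K) * exp (-(c₁ / (2 * c₄)) * (n : ℝ) ^ (1 - a))) := by
    filter_upwards [eventually_ge_atTop (2 * K + 1)] with n hn
    obtain ⟨hMlow, hMup⟩ := hM n (by omega)
    have hn₀ : (0 : ℝ) < n := Nat.cast_pos.mpr (by omega)
    have hMpos : (0 : ℝ) < M n := (by positivity : 0 < c₃ * (n : ℝ) ^ a).trans_le hMlow
    calc _ ≤ ∑ m ∈ range (M n), μ.real {ω | count n m ω < K} :=
          measureReal_biUnion_finset_le _ _
      _ ≤ ∑ m ∈ range (M n), (n : ℝ) ^ K * exp (-(c₁ / M n) * (n + 1 - K)) :=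
          sum_le_sum fun m hm => by
            simpa only [hcount] using measureReal_card_filter_lt_le hXmeas hiid hlaw (hmeas n m)
              (hbalanced n m (mem_range.mp hm)).1 (by omega)
      _ = M n * (n : ℝ) ^ K * exp (-(c₁ / M n) * (n + 1 - K)) := by
          rw [sum_const, card_range, nsmul_eq_mul, mul_assoc]
      _ ≤ _ := mul_pow_mul_exp_le_of_le_rpow hn₀ (by exact_mod_cast (by omega : 2 * K ≤ n))
          hc₁ hMpos hMup
  have hsummable := (summable_rpow_mul_exp_neg_mul_rpow (b := c₁ / (2 * c₄)) (r := 1 - a)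
    (by positivity) (by linarith) (a + K)).mul_left c₄
  filter_upwards [ae_eventually_notMem_of_measureReal_le hsummable hbad] with ω hω
  filter_upwards [hω] with n hn m hm
  by_contra! hlt
  exact hn (Set.mem_biUnion (mem_range.mpr hm) hlt)

/-- Lemma 1 of the paper, second part.
In the balanced-partition setting with `M n ≍ n^a`, `a ∈ [0, 1/3)`, the minimum cell count
diverges almost surely: `min_{1 ≤ m ≤ M n} n_m → ∞` almost surely as `n → ∞`. -/
theorem min_cell_count_tendsto_atTop_ae
    {Ω 𝓧 : Type*} [MeasurableSpace Ω]
    [MetricSpace 𝓧] [MeasurableSpace 𝓧] [BorelSpace 𝓧]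
    (μ : Measure Ω) [IsProbabilityMeasure μ]
    (X : ℕ → Ω → 𝓧) (hXmeas : ∀ i, Measurable (X i))
    (PX : Measure 𝓧) [IsProbabilityMeasure PX]
    (hiid : iIndepFun X μ)
    (hlaw : ∀ i, Measure.map (X i) μ = PX)
    (M : ℕ → ℕ) (Ωp : ℕ → ℕ → Set 𝓧)
    (hmeas : ∀ n m, MeasurableSet (Ωp n m))
    (hdisj : ∀ n, ∀ m₁ < M n, ∀ m₂ < M n, m₁ ≠ m₂ → Disjoint (Ωp n m₁) (Ωp n m₂))
    (hcover : ∀ n, (⋃ m ∈ Finset.range (M n), Ωp n m) = Set.univ)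
    (c₁ c₂ : ℝ) (hc₁ : 0 < c₁) (hc₁₂ : c₁ ≤ c₂)
    (hbalanced : ∀ n, ∀ m < M n,
      c₁ / (M n : ℝ) ≤ (PX (Ωp n m)).toReal ∧ (PX (Ωp n m)).toReal ≤ c₂ / (M n : ℝ))
    (a : ℝ) (ha₀ : 0 ≤ a) (ha : a < 1 / 3)
    (c₃ c₄ : ℝ) (hc₃ : 0 < c₃) (hc₃₄ : c₃ ≤ c₄)
    (hM : ∀ n : ℕ, 1 ≤ n →
      c₃ * (n : ℝ) ^ a ≤ (M n : ℝ) ∧ (M n : ℝ) ≤ c₄ * (n : ℝ) ^ a)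
    (count : ℕ → ℕ → Ω → ℕ)
    (hcount : ∀ n m ω,
      count n m ω = ((Finset.range n).filter fun i => X i ω ∈ Ωp n m).card) :
    ∀ᵐ ω ∂μ, ∀ K : ℕ, ∀ᶠ n in Filter.atTop, ∀ m < M n, K ≤ count n m ω :=
  min_cell_count_tendsto_atTop_ae_general μ X hXmeas PX hiid hlaw M Ωp hmeas c₁ c₂ hc₁ hbalanced a
    ha c₃ c₄ hc₃ hc₃₄ hM count hcount
end
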